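/- Every finite group of order less than $60$ is solvable. -/

import Mathlib

/-!
A minimal non-solvable group `G` is simple and is not a `p`-group. For a prime `p ∣ |G|` the
number `n_p` of Sylow `p`-subgroups divides `|G|`, is `1` mod `p` and exceeds `1`; the action of
`G` on its Sylow `p`-subgroups is faithful, so `|G| ∣ n_p!`; and `p * n_p ≠ |G|`, since
otherwise a Sylow subgroup of order `p` would be abelian and self-normalizing, and Burnside's
transfer theorem would give it a normal complement. For every `1 < n < 60` some prime `p ∣ n`
leaves no possible value for `n_p`; `AdmissibleSylowCount n p` collects these constraints.
-/

open scoped Nat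
open Subgroup

def AdmissibleSylowCount (n p m : ℕ) : Prop :=
  m ∣ n ∧ m % p = 1 ∧ 1 < m ∧ n ∣ m ! ∧ p * m ≠ n

instance (n p m : ℕ) : Decidable (AdmissibleSylowCount n p m) :=
  inferInstanceAs (Decidable (_ ∧ _ ∧ _ ∧ _ ∧ _))

universe u

lemma isSimpleGroup_of_not_isSolvable {G : Type u} [Group G] [Finite G]
    (hG : ¬Group.IsSolvable G)
    (hsmaller : ∀ (H : Type u) [Group H] [Finite H], Nat.card H < Nat.card G → Group.IsSolvable H) :
    IsSimpleGroup G := by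
  have : Nontrivial G := not_subsingleton_iff_nontrivial.mp fun _ ↦ hG inferInstance
  refine ⟨fun N hN ↦ ?_⟩
  by_contra! hNG
  have hN_lt : Nat.card N < Nat.card G := by
    rw [← N.index_mul_card]
    exact lt_mul_of_one_lt_left Nat.card_pos (one_lt_index_of_ne_top hNG.2)
  have hQ_lt : Nat.card (G ⧸ N) < Nat.card G := by
    rw [← index_eq_card, ← N.index_mul_card]
    exact lt_mul_of_one_lt_right (Nat.pos_of_ne_zero index_ne_zero_of_finite)
      (N.one_lt_card_iff_ne_bot.mpr hNG.1)
  exact hG ((Group.isSolvable_iff_subgroup_quotient N).mpr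
    ⟨hsmaller N hN_lt, hsmaller (G ⧸ N) hQ_lt⟩)

namespace IsSimpleGroup

variable {G : Type*} [Group G] [IsSimpleGroup G]

lemma card_dvd_factorial {X : Type*} [MulAction G X] [Finite X] {g : G} {x : X}
    (hgx : g • x ≠ x) : Nat.card G ∣ (Nat.card X)! := by
  have hker : (MulAction.toPermHom G X).ker = ⊥ :=
    (MulAction.toPermHom G X).normal_ker.eq_bot_or_eq_top.resolve_right fun h ↦
      hgx (congr($(((MulAction.toPermHom G X).mem_ker).mp (h ▸ mem_top g)) x))
  rw [← Nat.card_perm]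
  exact card_dvd_of_injective _ ((MulAction.toPermHom G X).ker_eq_bot_iff.mp hker)

lemma sylow_eq_bot_or_eq_top_of_normalizer_le_centralizer [Finite G] {p : ℕ} [Fact p.Prime]
    (P : Sylow p G) (hP : normalizer (P : Set G) ≤ centralizer (P : Set G)) :
    (P : Subgroup G) = ⊥ ∨ (P : Subgroup G) = ⊤ := by
  have hK := MonoidHom.ker_transferSylow_isComplement' P hP
  rcases (MonoidHom.transferSylow P hP).normal_ker.eq_bot_or_eq_top with h | h
  · rw [h, isComplement'_bot_left] at hK
    exact .inr hK
  · rw [h, isComplement'_top_left] at hK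
    exact .inl hK

variable [Finite G] {p : ℕ} [Fact p.Prime]

lemma one_lt_card_sylow (hp : p ∣ Nat.card G) (hG : ¬IsPGroup p G) :
    1 < Nat.card (Sylow p G) := by
  by_contra! h
  have := (Finite.card_le_one_iff_subsingleton).mp h
  obtain ⟨P⟩ : Nonempty (Sylow p G) := inferInstance
  rcases (P.normal_of_subsingleton).eq_bot_or_eq_top with hP | hP
  · exact P.ne_bot_of_dvd_card hp hP
  · exact hG (P.isPGroup'.of_equiv ((MulEquiv.subgroupCongr hP).trans topEquiv))

lemma card_dvd_factorial_card_sylow (h : 1 < Nat.card (Sylow p G)) :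
    Nat.card G ∣ (Nat.card (Sylow p G))! := by
  obtain ⟨P, Q, hPQ⟩ := Finite.one_lt_card_iff_nontrivial.mp h
  obtain ⟨g, rfl⟩ := MulAction.exists_smul_eq G P Q
  exact card_dvd_factorial hPQ.symm

lemma prime_mul_card_sylow_ne_card (h : 1 < Nat.card (Sylow p G)) :
    p * Nat.card (Sylow p G) ≠ Nat.card G := by
  intro hcard
  obtain ⟨P⟩ : Nonempty (Sylow p G) := inferInstance
  have hN : Nat.card (normalizer (P : Set G)) = p := by
    have := (normalizer (P : Set G)).card_mul_index
    rw [← P.card_eq_index_normalizer, ← hcard] at this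
    exact Nat.eq_of_mul_eq_mul_right (by omega) this
  have hP_ne_bot : (P : Subgroup G) ≠ ⊥ := P.ne_bot_of_dvd_card ⟨_, hcard.symm⟩
  have hP : Nat.card P = p := by
    have hdvd : Nat.card P ∣ p := (card_dvd_of_le P.le_normalizer).trans hN.dvd
    exact ((Nat.dvd_prime Fact.out).mp hdvd).resolve_left
      ((P : Subgroup G).one_lt_card_iff_ne_bot.mpr hP_ne_bot).ne'
  have hPN : (P : Subgroup G) = normalizer P :=
    eq_of_le_of_card_ge P.le_normalizer (by rw [hN, hP])
  have : IsCyclic P := isCyclic_of_prime_card hP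
  have : IsMulCommutative P := ⟨⟨fun a b ↦ IsCyclic.commGroup.mul_comm a b⟩⟩
  rcases sylow_eq_bot_or_eq_top_of_normalizer_le_centralizer P
    (hPN ▸ le_centralizer (P : Subgroup G)) with h' | h'
  · exact hP_ne_bot h'
  · have hG : Nat.card G = p := by rw [← hP, h', card_top]
    rw [hG] at hcard
    nlinarith [(Fact.out : p.Prime).two_le]

lemma admissibleSylowCount_card_sylow (hp : p ∣ Nat.card G) (hG : ¬IsPGroup p G) :
    AdmissibleSylowCount (Nat.card G) p (Nat.card (Sylow p G)) := by
  have h := one_lt_card_sylow hp hG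
  obtain ⟨P⟩ : Nonempty (Sylow p G) := inferInstance
  refine ⟨P.card_dvd_index.trans (index_dvd_card _), ?_, h,
    card_dvd_factorial_card_sylow h, prime_mul_card_sylow_ne_card h⟩
  have := card_sylow_modEq_one p G
  rwa [Nat.ModEq, Nat.mod_eq_of_lt (Fact.out : p.Prime).one_lt] at this

end IsSimpleGroup

theorem exists_prime_forall_not_admissibleSylowCount :
    ∀ n < 60, 1 < n →
      ∃ p ∈ n.primeFactors, ∀ m ∈ n.divisors, ¬AdmissibleSylowCount n p m := by
  decide +kernel

theorem stmt_7 (G : Type*) [Group G] [Finite G] (hcard : Nat.card G < 60) :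
    IsSolvable G := by
  induction h : Nat.card G using Nat.strong_induction_on generalizing G with
  | _ n ih =>
  subst h
  by_contra hG
  have : IsSimpleGroup G := isSimpleGroup_of_not_isSolvable hG fun H _ _ hH ↦
    ih _ hH H (hH.trans hcard) rfl
  obtain ⟨p, hp, hm⟩ :=
    exists_prime_forall_not_admissibleSylowCount _ hcard Finite.one_lt_card
  have : Fact p.Prime := ⟨Nat.prime_of_mem_primeFactors hp⟩
  have hpG : ¬IsPGroup p G := fun hP ↦
    hG (have := hP.isNilpotent; show Group.IsSolvable G from inferInstance)
  have hadm :=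
    IsSimpleGroup.admissibleSylowCount_card_sylow (Nat.dvd_of_mem_primeFactors hp) hpG
  exact hm _ (Nat.mem_divisors.mpr ⟨hadm.1, Nat.card_pos.ne'⟩) hadm
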